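/- For every k ≥ 0 and ρ ≥ 0 there exists a function u₀ ∈ X^k_ρ (hence u₀ ∈ H^k_G) such that u₀ ∉ H^{k+ε}_G for every ε > 0. Concretely, choosing blocks with ‖u_{I,m}‖²_{L²} = [(1+(2m+1)I)^k ⟨I⟩^ρ log(1+I)² (m+1) log(m+2)²]^{−1} for I ∈ 2^ℕ, m ∈ ℕ (and zero for I < 1), one has Σ_{I,m} (1+(2m+1)I)^{k+ε} ‖u_{I,m}‖²_{L²} = ∞ for every ε > 0, while Σ_{I,m} (1+(2m+1)I)^k ⟨I⟩^ρ ‖u_{I,m}‖²_{L²} < ∞. -/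

import Mathlib

open Real

/-- The Sobolev weight `1 + (2m+1)·2^i` of the block indexed by `(i, m) ∈ ℕ × ℕ`
(dyadic frequency `2^i ∈ 2^ℕ`, Hermite mode `m`). -/
noncomputable def blockWeightN (p : ℕ × ℕ) : ℝ :=
  1 + (2 * (p.2 : ℝ) + 1) * (2 : ℝ) ^ p.1

/-- The japanese bracket `⟨2^i⟩ = √(1 + (2^i)²)`. -/
noncomputable def dyadicBracket (i : ℕ) : ℝ :=
  Real.sqrt (1 + ((2 : ℝ) ^ i) ^ 2)

/-- The squared `L²` block norms of the rough potential:
`‖u_{I,m}‖²_{L²} = [(1+(2m+1)I)^k ⟨I⟩^ρ log(1+I)² (m+1) log(m+2)²]⁻¹`. -/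
noncomputable def roughPotentialBlock (k ρ : ℝ) (p : ℕ × ℕ) : ℝ :=
  (blockWeightN p ^ k * dyadicBracket p.1 ^ ρ * Real.log (1 + (2 : ℝ) ^ p.1) ^ 2 *
    ((p.2 : ℝ) + 1) * Real.log ((p.2 : ℝ) + 2) ^ 2)⁻¹

/-!
The weighted `X^k_ρ` term of block `(i, m)` is `(log (1 + 2^i))⁻² · ((m + 1) log² (m + 2))⁻¹`, a
product of two convergent series: the first because `log (1 + 2^i)` grows linearly in `i`, the
second because Cauchy condensation turns it into a series of the first kind. Raising the Sobolev
exponent by `ε` multiplies each term by `blockWeightN (i, m) ^ ε ≥ (m + 2) ^ ε`, and since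
`log² x ≤ (2/ε)² x^ε`, every column `i` then dominates a multiple of the harmonic series.
-/

lemma inv_log_sq_le_of_two_pow_le {x : ℝ} (n : ℕ) (h : (2 : ℝ) ^ (n + 1) ≤ x ^ 2) :
    (log x ^ 2)⁻¹ ≤ 4 / log 2 ^ 2 * (((n : ℝ) + 1) ^ 2)⁻¹ := by
  have hlog2 : 0 < log 2 := log_pos one_lt_two
  have hlin : ((n : ℝ) + 1) * log 2 ≤ 2 * log x := by
    have := log_le_log (by positivity) h
    rw [log_pow, log_pow] at this
    push_cast at this
    linarith
  calc (log x ^ 2)⁻¹ ≤ ((((n : ℝ) + 1) * log 2 / 2) ^ 2)⁻¹ := by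
        gcongr
        linarith
    _ = 4 / log 2 ^ 2 * (((n : ℝ) + 1) ^ 2)⁻¹ := by field_simp; ring

lemma summable_inv_log_sq_of_two_pow_le {f : ℕ → ℝ} (h : ∀ n, (2 : ℝ) ^ (n + 1) ≤ f n ^ 2) :
    Summable fun n => (log (f n) ^ 2)⁻¹ := by
  have hsq : Summable fun n : ℕ => (((n : ℝ) + 1) ^ 2)⁻¹ := by
    simpa using (summable_nat_add_iff 1).mpr (summable_nat_pow_inv.mpr one_lt_two)
  exact .of_nonneg_of_le (fun n => by positivity)
    (fun n => inv_log_sq_le_of_two_pow_le n (h n)) (hsq.mul_left _)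

lemma summable_inv_mul_log_sq :
    Summable fun n : ℕ => (((n : ℝ) + 1) * log ((n : ℝ) + 2) ^ 2)⁻¹ := by
  have hanti : ∀ ⦃m n : ℕ⦄, 0 < m → m ≤ n →
      (((n : ℝ) + 1) * log ((n : ℝ) + 2) ^ 2)⁻¹ ≤ (((m : ℝ) + 1) * log ((m : ℝ) + 2) ^ 2)⁻¹ := by
    intro m n _ hmn
    have hmn : (m : ℝ) ≤ n := by exact_mod_cast hmn
    have : 0 < log ((m : ℝ) + 2) := log_pos (by linarith [m.cast_nonneg (α := ℝ)])
    gcongr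
  refine (summable_condensed_iff_of_nonneg (fun n => by positivity) hanti).mp ?_
  have hlog : Summable fun k : ℕ => (log ((2 : ℝ) ^ k + 2) ^ 2)⁻¹ :=
    summable_inv_log_sq_of_two_pow_le fun k => by
      have : (0 : ℝ) < 2 ^ k := by positivity
      nlinarith [pow_succ (2 : ℝ) k]
  refine .of_nonneg_of_le (fun k => by positivity) (fun k => ?_) hlog
  push_cast
  have hL : 0 < log ((2 : ℝ) ^ k + 2) := log_pos (by linarith [pow_pos two_pos (M₀ := ℝ) k])
  rw [mul_inv, ← mul_assoc]
  refine mul_le_of_le_one_left (by positivity) ?_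
  rw [mul_inv_le_iff₀ (by positivity)]
  linarith

lemma inv_le_mul_rpow_mul_inv_mul_log_sq {x ε : ℝ} (hx : 1 < x) (hε : 0 < ε) :
    x⁻¹ ≤ 4 / ε ^ 2 * (x ^ ε * (x * log x ^ 2)⁻¹) := by
  have hL : 0 < log x := log_pos hx
  have hlog : log x ≤ x ^ (ε / 2) / (ε / 2) := log_le_rpow_div (by linarith) (by positivity)
  have hsq : log x ^ 2 ≤ 4 / ε ^ 2 * x ^ ε := by
    calc log x ^ 2 ≤ (x ^ (ε / 2) / (ε / 2)) ^ 2 := by gcongr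
      _ = 4 / ε ^ 2 * x ^ ε := by
        rw [div_pow, ← rpow_natCast, ← rpow_mul (by linarith)]
        field_simp
        norm_num
  calc x⁻¹ = (x * log x ^ 2)⁻¹ * log x ^ 2 := by field_simp
    _ ≤ (x * log x ^ 2)⁻¹ * (4 / ε ^ 2 * x ^ ε) := by gcongr
    _ = 4 / ε ^ 2 * (x ^ ε * (x * log x ^ 2)⁻¹) := by ring

lemma not_summable_rpow_mul_inv_mul_log_sq {ε : ℝ} (hε : 0 < ε) :
    ¬ Summable fun n : ℕ => ((n : ℝ) + 2) ^ ε * (((n : ℝ) + 2) * log ((n : ℝ) + 2) ^ 2)⁻¹ := by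
  intro hs
  have hharm : Summable fun n : ℕ => ((n : ℝ) + 2)⁻¹ :=
    (hs.mul_left (4 / ε ^ 2)).of_nonneg_of_le (fun n => by positivity) fun n =>
      inv_le_mul_rpow_mul_inv_mul_log_sq (by linarith [n.cast_nonneg (α := ℝ)]) hε
  exact not_summable_natCast_inv ((summable_nat_add_iff 2).mp (by simpa using hharm))

lemma add_two_le_blockWeightN (p : ℕ × ℕ) : (p.2 : ℝ) + 2 ≤ blockWeightN p := by
  have : (1 : ℝ) ≤ 2 ^ p.1 := one_le_pow₀ one_le_two
  unfold blockWeightN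
  nlinarith [p.2.cast_nonneg (α := ℝ)]

lemma blockWeightN_pos (p : ℕ × ℕ) : 0 < blockWeightN p :=
  lt_of_lt_of_le (by positivity) (add_two_le_blockWeightN p)

lemma dyadicBracket_pos (i : ℕ) : 0 < dyadicBracket i :=
  sqrt_pos.mpr (by positivity)

lemma roughPotentialBlock_eq (k ρ : ℝ) (p : ℕ × ℕ) :
    roughPotentialBlock k ρ p = (blockWeightN p ^ k)⁻¹ * (dyadicBracket p.1 ^ ρ)⁻¹ *
      ((log (1 + (2 : ℝ) ^ p.1) ^ 2)⁻¹ * (((p.2 : ℝ) + 1) * log ((p.2 : ℝ) + 2) ^ 2)⁻¹) := by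
  simp only [roughPotentialBlock, mul_inv]
  ring

lemma rpow_mul_rpow_mul_roughPotentialBlock (k ρ : ℝ) (p : ℕ × ℕ) :
    blockWeightN p ^ k * dyadicBracket p.1 ^ ρ * roughPotentialBlock k ρ p =
      (log (1 + (2 : ℝ) ^ p.1) ^ 2)⁻¹ * (((p.2 : ℝ) + 1) * log ((p.2 : ℝ) + 2) ^ 2)⁻¹ := by
  have := rpow_pos_of_pos (blockWeightN_pos p) k
  have := rpow_pos_of_pos (dyadicBracket_pos p.1) ρ
  rw [roughPotentialBlock_eq]
  field_simp

lemma rpow_add_mul_roughPotentialBlock (k ρ ε : ℝ) (p : ℕ × ℕ) :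
    blockWeightN p ^ (k + ε) * roughPotentialBlock k ρ p =
      (dyadicBracket p.1 ^ ρ * log (1 + (2 : ℝ) ^ p.1) ^ 2)⁻¹ *
        (blockWeightN p ^ ε * (((p.2 : ℝ) + 1) * log ((p.2 : ℝ) + 2) ^ 2)⁻¹) := by
  have := rpow_pos_of_pos (blockWeightN_pos p) k
  rw [rpow_add (blockWeightN_pos p), roughPotentialBlock_eq]
  field_simp

lemma not_summable_rpow_add_mul_roughPotentialBlock_column (k ρ : ℝ) {ε : ℝ} (hε : 0 < ε)
    (i : ℕ) :
    ¬ Summable fun m : ℕ => blockWeightN (i, m) ^ (k + ε) * roughPotentialBlock k ρ (i, m) := by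
  intro hs
  have hc : 0 < dyadicBracket i ^ ρ * log (1 + (2 : ℝ) ^ i) ^ 2 := by
    have := rpow_pos_of_pos (dyadicBracket_pos i) ρ
    have := log_pos (by linarith [pow_pos two_pos (M₀ := ℝ) i] : (1 : ℝ) < 1 + 2 ^ i)
    positivity
  refine not_summable_rpow_mul_inv_mul_log_sq hε
    ((hs.mul_left (dyadicBracket i ^ ρ * log (1 + (2 : ℝ) ^ i) ^ 2)).of_nonneg_of_le
      (fun m => by positivity) fun m => ?_)
  have hL : 0 < log ((m : ℝ) + 2) := log_pos (by linarith)
  rw [rpow_add_mul_roughPotentialBlock, ← mul_assoc, mul_inv_cancel₀ hc.ne', one_mul]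
  have := blockWeightN_pos (i, m)
  gcongr
  · exact add_two_le_blockWeightN (i, m)
  · linarith

theorem rough_potential_exists_general (k ρ : ℝ) :
    (Summable fun p : ℕ × ℕ =>
        blockWeightN p ^ k * dyadicBracket p.1 ^ ρ * roughPotentialBlock k ρ p) ∧
    ∀ ε : ℝ, 0 < ε →
      ¬ Summable (fun p : ℕ × ℕ => blockWeightN p ^ (k + ε) * roughPotentialBlock k ρ p) := by
  refine ⟨?_, fun ε hε hs => ?_⟩
  · have hdyadic : Summable fun i : ℕ => (log (1 + (2 : ℝ) ^ i) ^ 2)⁻¹ :=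
      summable_inv_log_sq_of_two_pow_le fun i => by
        nlinarith [pow_succ (2 : ℝ) i, pow_pos two_pos (M₀ := ℝ) i]
    refine (hdyadic.mul_of_nonneg summable_inv_mul_log_sq (fun i => by positivity)
      (fun m => by positivity)).congr fun p => (rpow_mul_rpow_mul_roughPotentialBlock k ρ p).symm
  · exact not_summable_rpow_add_mul_roughPotentialBlock_column k ρ hε 0
      (hs.comp_injective (Prod.mk_right_injective 0))

/-- Existence of rough potentials: for all `k, ρ ≥ 0`, the potential with the
above block norms lies in `X^k_ρ` (the weighted series converges) but in no
`H^{k+ε}_G` with `ε > 0` (the `H^{k+ε}` series diverges). -/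
theorem rough_potential_exists (k ρ : ℝ) (hk : 0 ≤ k) (hρ : 0 ≤ ρ) :
    (Summable fun p : ℕ × ℕ =>
        blockWeightN p ^ k * dyadicBracket p.1 ^ ρ * roughPotentialBlock k ρ p) ∧
    ∀ ε : ℝ, 0 < ε →
      ¬ Summable (fun p : ℕ × ℕ => blockWeightN p ^ (k + ε) * roughPotentialBlock k ρ p) :=
  rough_potential_exists_general k ρ
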